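/- For all natural numbers m, n ≥ 2, the completion-time function T on unit cells of the m×n grid is injective: distinct cells (i,j) and (i',j') with i, i' < m−1 and j, j' < n−1 have T(i,j) ≠ T(i',j'). -/
import Mathlib


/-- The boustrophedon (S-rule) enumeration of the `m × n` grid of vertices:
the `k`-th vertex visited is in row `k / n`; even-indexed rows are read
left-to-right and odd-indexed rows right-to-left. -/
def bous (m n : ℕ) (hn : 1 ≤ n) (k : Fin (m * n)) : Fin m × Fin n :=
  if Even ((k : ℕ) / n) then
    (⟨(k : ℕ) / n, Nat.div_lt_of_lt_mul (Nat.mul_comm m n ▸ k.isLt)⟩, ⟨(k : ℕ) % n, Nat.mod_lt _ hn⟩)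
  else
    (⟨(k : ℕ) / n, Nat.div_lt_of_lt_mul (Nat.mul_comm m n ▸ k.isLt)⟩,
     ⟨n - 1 - (k : ℕ) % n, by omega⟩)

lemma bous_fst (m n : ℕ) (hn : 1 ≤ n) (k : Fin (m * n)) :
    ((bous m n hn k).1 : ℕ) = (k : ℕ) / n := by
  unfold bous; split <;> rfl

lemma bous_snd (m n : ℕ) (hn : 1 ≤ n) (k : Fin (m * n)) :
    ((bous m n hn k).2 : ℕ) =
      if Even ((k : ℕ) / n) then (k : ℕ) % n else n - 1 - (k : ℕ) % n := by
  unfold bous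
  by_cases h : Even ((k : ℕ) / n) <;> simp [h]

lemma bous_injective (m n : ℕ) (hn : 1 ≤ n) : Function.Injective (bous m n hn) := by
  intro a b h
  have hd : (a : ℕ) / n = (b : ℕ) / n := by
    rw [← bous_fst m n hn a, ← bous_fst m n hn b, h]
  have hs := bous_snd m n hn a
  rw [h, bous_snd m n hn b, ← hd] at hs
  have han : (a : ℕ) % n < n := Nat.mod_lt _ hn
  have hbn : (b : ℕ) % n < n := Nat.mod_lt _ hn
  have hm : (a : ℕ) % n = (b : ℕ) % n := by
    by_cases hp : Even ((a : ℕ) / n) <;> simp only [hp, if_true, if_false,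
      if_pos, if_neg, not_false_iff] at hs <;> omega
  have ha := Nat.div_add_mod (a : ℕ) n
  have hb := Nat.div_add_mod (b : ℕ) n
  rw [hd, hm] at ha
  exact Fin.ext (by omega)


/-- The position (time) at which the vertex `v` is visited by the
boustrophedon enumeration, i.e. `f⁻¹ v` as a natural number. -/
noncomputable def bousInv (m n : ℕ) (hn : 1 ≤ n) (v : Fin m × Fin n) : ℕ :=
  haveI : Nonempty (Fin (m * n)) := ⟨⟨0, Nat.mul_pos v.1.pos v.2.pos⟩⟩
  (Function.invFun (bous m n hn) v : Fin (m * n)).val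

lemma bousInv_eq (m n : ℕ) (hn : 1 ≤ n) (i j : ℕ) (hi : i < m) (hj : j < n) :
    bousInv m n hn (⟨i, hi⟩, ⟨j, hj⟩) =
      i * n + (if Even i then j else n - 1 - j) := by
  set c : ℕ := if Even i then j else n - 1 - j with hc
  have hcn : c < n := by rw [hc]; split <;> omega
  have hk : i * n + c < m * n := by
    have h1 : (i + 1) * n ≤ m * n := Nat.mul_le_mul_right n (by omega)
    have h2 : (i + 1) * n = i * n + n := by ring
    omega
  have hdiv : (i * n + c) / n = i := by
    rw [Nat.add_comm, Nat.add_mul_div_right _ _ (by omega : 0 < n),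
      Nat.div_eq_of_lt hcn, Nat.zero_add]
  have hmod : (i * n + c) % n = c := by
    rw [Nat.add_comm, Nat.add_mul_mod_self_right, Nat.mod_eq_of_lt hcn]
  have hbk : bous m n hn ⟨i * n + c, hk⟩ = (⟨i, hi⟩, ⟨j, hj⟩) := by
    have h1 := bous_fst m n hn ⟨i * n + c, hk⟩
    have h2 := bous_snd m n hn ⟨i * n + c, hk⟩
    simp only [hdiv, hmod] at h1 h2
    have h2' : ((bous m n hn ⟨i * n + c, hk⟩).2 : ℕ) = j := by
      rw [h2, hc]; by_cases he : Even i <;> simp [he] <;> omega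
    ext
    · exact h1
    · exact h2'
  haveI : Nonempty (Fin (m * n)) := ⟨⟨i * n + c, hk⟩⟩
  have key : Function.invFun (bous m n hn) (⟨i, hi⟩, ⟨j, hj⟩) = ⟨i * n + c, hk⟩ := by
    rw [← hbk]
    exact Function.leftInverse_invFun (bous_injective m n hn) _
  unfold bousInv
  rw [key]


/-- The completion time `T(i,j)` of the unit cell (room) `(i,j)`
(with `i < m - 1`, `j < n - 1`): the maximum of `f⁻¹` over its four corners
`(i,j)`, `(i+1,j)`, `(i,j+1)`, `(i+1,j+1)`.  This encodes the S-rule's setting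
that a room is traversed exactly when the last vertex of its contour is. -/
noncomputable def cellTime (m n : ℕ) (hn : 1 ≤ n) (i j : ℕ)
    (hi : i < m - 1) (hj : j < n - 1) : ℕ :=
  max
    (max (bousInv m n hn (⟨i, by omega⟩, ⟨j, by omega⟩))
         (bousInv m n hn (⟨i + 1, by omega⟩, ⟨j, by omega⟩)))
    (max (bousInv m n hn (⟨i, by omega⟩, ⟨j + 1, by omega⟩))
         (bousInv m n hn (⟨i + 1, by omega⟩, ⟨j + 1, by omega⟩)))

lemma cellTime_eq (m n : ℕ) (hn : 1 ≤ n) (i j : ℕ)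
    (hi : i < m - 1) (hj : j < n - 1) :
    cellTime m n hn i j hi hj =
      (i + 1) * n + (if Even (i + 1) then j + 1 else n - 1 - j) := by
  unfold cellTime
  rw [bousInv_eq m n hn i j (by omega) (by omega),
    bousInv_eq m n hn (i+1) j (by omega) (by omega),
    bousInv_eq m n hn i (j+1) (by omega) (by omega),
    bousInv_eq m n hn (i+1) (j+1) (by omega) (by omega)]
  have h2 : (i + 1) * n = i * n + n := by ring
  by_cases he : Even i
  · have he1 : ¬ Even (i + 1) := by simp [Nat.even_add_one, he]
    rw [if_pos he, if_neg he1, if_pos he, if_neg he1, if_neg he1]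
    omega
  · have he1 : Even (i + 1) := by simp [Nat.even_add_one, he]
    rw [if_neg he, if_pos he1, if_neg he, if_pos he1, if_pos he1]
    omega


/-- For all `m, n ≥ 2`, the completion-time function `T` on unit cells of the
`m × n` grid is injective: distinct cells `(i,j)` and `(i',j')` with
`i, i' < m - 1` and `j, j' < n - 1` have `T(i,j) ≠ T(i',j')`. -/
theorem cellTime_injective (m n : ℕ) (hm : 2 ≤ m) (hn : 2 ≤ n)
    (i j i' j' : ℕ) (hi : i < m - 1) (hj : j < n - 1)
    (hi' : i' < m - 1) (hj' : j' < n - 1) (hne : (i, j) ≠ (i', j')) :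
    cellTime m n (by omega) i j hi hj ≠ cellTime m n (by omega) i' j' hi' hj' := by
  intro h
  rw [cellTime_eq, cellTime_eq] at h
  set c : ℕ := if Even (i + 1) then j + 1 else n - 1 - j with hc
  set c' : ℕ := if Even (i' + 1) then j' + 1 else n - 1 - j' with hc'
  have hcb : 1 ≤ c ∧ c ≤ n - 1 := by rw [hc]; split <;> omega
  have hcb' : 1 ≤ c' ∧ c' ≤ n - 1 := by rw [hc']; split <;> omega
  have hii : i = i' := by
    rcases lt_trichotomy i i' with hlt | heq | hgt
    · have h1 : (i + 2) * n ≤ (i' + 1) * n := Nat.mul_le_mul_right n (by omega)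
      have h2 : (i + 2) * n = (i + 1) * n + n := by ring
      omega
    · exact heq
    · have h1 : (i' + 2) * n ≤ (i + 1) * n := Nat.mul_le_mul_right n (by omega)
      have h2 : (i' + 2) * n = (i' + 1) * n + n := by ring
      omega
  subst hii
  have hcc : c = c' := by omega
  have hjj : j = j' := by
    rw [hc, hc'] at hcc
    by_cases he : Even (i + 1) <;> simp only [he, if_true, if_false, if_pos, if_neg,
      not_false_iff] at hcc <;> omega
  exact hne (by rw [hjj])
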